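/- Let D be a connected rooted digraph to which reduction rules R1–R4 do not apply. If two bags A and B of the contracted graph D_c are linked, then D contains exactly one edge from a vertex of A to a vertex of B, and exactly one edge from a vertex of B to a vertex of A. -/

import Mathlib

namespace OutBranching

variable {V : Type}

/-! ### Basic digraph notions -/

/-- `b` is reachable from `a` by a directed path. -/
def Reaches (E : V → V → Prop) (a b : V) : Prop := Relation.ReflTransGen E a b

/-- The rooted digraph `(E, r)` is connected: every vertex is reachable from the root. -/
def Connected (E : V → V → Prop) (r : V) : Prop := ∀ v, Reaches E r v

/-- `b` is reachable from `a` by a directed path avoiding the vertex set `S`. -/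
def ReachAvoid (E : V → V → Prop) (S : Set V) (a b : V) : Prop :=
  a ∉ S ∧ b ∉ S ∧ Relation.ReflTransGen (fun x y => E x y ∧ x ∉ S ∧ y ∉ S) a b

/-- A cut-vertex: a vertex `v ≠ r` whose removal makes some (other) vertex unreachable
from the root `r`. -/
def IsCutVertex (E : V → V → Prop) (r v : V) : Prop :=
  v ≠ r ∧ ∃ u, u ≠ v ∧ ¬ ReachAvoid E {v} r u

/-- The set of cut-vertices. -/
def cutVertices (E : V → V → Prop) (r : V) : Set V := {v | IsCutVertex E r v}

/-- The edge relation obtained by deleting the single edge `(u,v)`. -/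
def delEdge (E : V → V → Prop) (u v : V) : V → V → Prop :=
  fun a b => E a b ∧ ¬ (a = u ∧ b = v)

/-- A cut-edge: an edge `(u,v)` whose deletion makes some vertex unreachable from `r`. -/
def IsCutEdge (E : V → V → Prop) (r u v : V) : Prop :=
  E u v ∧ ∃ w, ¬ Reaches (delEdge E u v) r w

/-- A lonely cut-edge: no other cut-edge has the same tail. -/
def IsLonelyCutEdge (E : V → V → Prop) (r u v : V) : Prop :=
  IsCutEdge E r u v ∧ ∀ w, IsCutEdge E r u w → w = v

/-- A branching cut-edge: some other cut-edge has the same tail. -/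
def IsBranchingCutEdge (E : V → V → Prop) (r u v : V) : Prop :=
  IsCutEdge E r u v ∧ ∃ w, w ≠ v ∧ IsCutEdge E r u w

/-- In-neighbourhood. -/
def inN (E : V → V → Prop) (v : V) : Set V := {u | E u v}

/-- Out-neighbourhood. -/
def outN (E : V → V → Prop) (v : V) : Set V := {w | E v w}

/-- Private neighbors of `u`: out-neighbors of `u` not reachable from `r` in `D - u`. -/
def privateNbrs (E : V → V → Prop) (r u : V) : Set V :=
  {v | E u v ∧ ¬ ReachAvoid E {u} r v}

/-- A special vertex: in-degree at least 3, or an incoming simple edge. -/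
def Special (E : V → V → Prop) (v : V) : Prop :=
  3 ≤ (inN E v).ncard ∨ ∃ u, E u v ∧ ¬ E v u

/-- The set of special vertices. -/
def sp (E : V → V → Prop) : Set V := {v | Special E v}

/-! ### Outbranchings and `maxleaf` -/

/-- `T` is an outbranching of `(E, r)`: a spanning subdigraph in which every vertex is
reachable from `r`, every vertex other than `r` has in-degree exactly 1,
and `r` has in-degree 0. -/
structure IsOutbranching (E : V → V → Prop) (r : V) (T : V → V → Prop) : Prop where
  sub : ∀ ⦃a b⦄, T a b → E a b
  reach : ∀ v, Reaches T r v
  indeg : ∀ v, v ≠ r → ∃! u, T u v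
  rootIndeg : ∀ u, ¬ T u r

/-- The number of leaves (vertices of out-degree 0) of `T`. -/
noncomputable def leafCount (T : V → V → Prop) : ℕ := {v | ∀ w, ¬ T v w}.ncard

/-- The maximum number of leaves over all outbranchings of `(E, r)`. -/
noncomputable def maxleaf (E : V → V → Prop) (r : V) : ℕ :=
  sSup {n | ∃ T, IsOutbranching E r T ∧ leafCount T = n}

/-! ### The reduction rules (each `RuleᵢNA` says that rule i does NOT apply) -/

/-- Rule 1 does not apply: every vertex is reachable from the root. -/
def Rule1NA (E : V → V → Prop) (r : V) : Prop := Connected E r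

/-- Rule 2 does not apply: no cut-vertex has exactly one incoming edge,
and no cut-vertex has exactly one outgoing edge. -/
def Rule2NA (E : V → V → Prop) (r : V) : Prop :=
  ∀ v, IsCutVertex E r v → ¬ (∃! u, E u v) ∧ ¬ (∃! w, E v w)

/-- Rule 3 does not apply: there is no proper bipath of length 4, i.e. no sequence
of 5 distinct vertices `a b c d e` whose three internal vertices have their in- and
out-neighbourhoods equal to the pair of adjacent vertices on the sequence. -/
def Rule3NA (E : V → V → Prop) : Prop :=
  ¬ ∃ a b c d e : V, List.Pairwise (· ≠ ·) [a, b, c, d, e] ∧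
    (∀ w, (E w b ↔ w = a ∨ w = c) ∧ (E b w ↔ w = a ∨ w = c)) ∧
    (∀ w, (E w c ↔ w = b ∨ w = d) ∧ (E c w ↔ w = b ∨ w = d)) ∧
    (∀ w, (E w d ↔ w = c ∨ w = e) ∧ (E d w ↔ w = c ∨ w = e))

/-- Rule 4 does not apply: there is no vertex `x` with an in-neighbor `y` such that
removing all in-neighbors of `x` other than `y` disconnects `y` from `r`. -/
def Rule4NA (E : V → V → Prop) (r : V) : Prop :=
  ¬ ∃ x y, E y x ∧ ¬ ReachAvoid E {v | E v x ∧ v ≠ y} r y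

/-- Rule 5 does not apply: there are no two cut-edges `(x₁,y₁)`, `(x₂,y₂)` with both
`(x₁,x₂)` and `(x₂,x₁)` being edges. -/
def Rule5NA (E : V → V → Prop) (r : V) : Prop :=
  ¬ ∃ x₁ y₁ x₂ y₂, IsCutEdge E r x₁ y₁ ∧ IsCutEdge E r x₂ y₂ ∧ E x₁ x₂ ∧ E x₂ x₁

/-- Rule 6 does not apply: there is no cut-edge `(u,v)` with `(v,u)` an edge. -/
def Rule6NA (E : V → V → Prop) (r : V) : Prop :=
  ¬ ∃ u v, IsCutEdge E r u v ∧ E v u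

/-- Reduction rules R1–R4 do not apply. -/
def Reduced4 (E : V → V → Prop) (r : V) : Prop :=
  Rule1NA E r ∧ Rule2NA E r ∧ Rule3NA E ∧ Rule4NA E r

/-- Reduction rules R1–R6 do not apply. -/
def Reduced6 (E : V → V → Prop) (r : V) : Prop :=
  Reduced4 E r ∧ Rule5NA E r ∧ Rule6NA E r

/-! ### Contraction -/

/-- The setoid on `V` generated by identifying the endpoints of the edges in `C`. -/
def contractSetoid (C : V → V → Prop) : Setoid V := Relation.EqvGen.setoid C

/-- Vertices of the digraph obtained by contracting all edges in `C`. -/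
def CVert (C : V → V → Prop) : Type := Quotient (contractSetoid C)

/-- The projection of a vertex to the contracted digraph. -/
def cmk (C : V → V → Prop) (x : V) : CVert C := Quotient.mk (contractSetoid C) x

/-- The edge relation of the digraph obtained from `E` by contracting all edges in `C`
(loops and parallel edges are discarded). -/
def contractE (E : V → V → Prop) (C : V → V → Prop) : CVert C → CVert C → Prop :=
  fun a b => a ≠ b ∧ ∃ x y, cmk C x = a ∧ cmk C y = b ∧ E x y

/-- The relation consisting of a single edge `(u,v)` (used for contracting one edge). -/
def singleEdge (u v : V) : V → V → Prop := fun a b => a = u ∧ b = v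

/-- The relation of lonely cut-edges. -/
def lonelyRel (E : V → V → Prop) (r : V) : V → V → Prop :=
  fun u v => IsLonelyCutEdge E r u v

/-- Vertices of the contracted graph `D_c`, obtained by contracting all lonely cut-edges. -/
def ContractedVert (E : V → V → Prop) (r : V) : Type := CVert (lonelyRel E r)

/-- The edge relation of the contracted graph `D_c`. -/
def contractedE (E : V → V → Prop) (r : V) : ContractedVert E r → ContractedVert E r → Prop :=
  contractE E (lonelyRel E r)

/-- The root of the contracted graph `D_c`. -/
def contractedRoot (E : V → V → Prop) (r : V) : ContractedVert E r := cmk (lonelyRel E r) r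

/-- The bag of a vertex of `D_c`: the set of original vertices contracted into it. -/
def bag (E : V → V → Prop) (r : V) (a : ContractedVert E r) : Set V :=
  {x | cmk (lonelyRel E r) x = a}

/-- `t` is a tail of the bag `B`: it is the tail of a contracted (lonely) cut-edge inside `B`,
or `B` is the singleton `{t}`. -/
def IsTailOf (E : V → V → Prop) (r : V) (B : Set V) (t : V) : Prop :=
  t ∈ B ∧ (B = {t} ∨ ∃ h ∈ B, IsLonelyCutEdge E r t h)

/-- `h` is a head of the bag `B`: it is the head of a contracted (lonely) cut-edge inside `B`,
or `B` is the singleton `{h}`. -/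
def IsHeadOf (E : V → V → Prop) (r : V) (B : Set V) (h : V) : Prop :=
  h ∈ B ∧ (B = {h} ∨ ∃ t ∈ B, IsLonelyCutEdge E r t h)

/-- Two bags are linked if there is an edge of `D` in each direction between them. -/
def LinkedBags (E : V → V → Prop) (A B : Set V) : Prop :=
  (∃ x ∈ A, ∃ y ∈ B, E x y) ∧ (∃ x ∈ B, ∃ y ∈ A, E x y)

/-! ### Duplication of a vertex -/

/-- Duplicating the vertex `v`: the new vertex is `none`, receiving/sending edges exactly
as `v` does. -/
def dupE (E : V → V → Prop) (v : V) : Option V → Option V → Prop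
  | some a, some b => E a b
  | some a, none => E a v
  | none, some b => E v b
  | none, none => False

/-! ### Undirected notions: underlying graph, minors -/

/-- The underlying undirected simple graph of a digraph. -/
def underlying (E : V → V → Prop) : SimpleGraph V where
  Adj a b := a ≠ b ∧ (E a b ∨ E b a)
  symm := ⟨fun a b h => ⟨Ne.symm h.1, h.2.symm⟩⟩
  loopless := ⟨fun a h => h.1 rfl⟩

/-- `H` is a minor of `G`: there is a minor model of `H` in `G`. -/
def IsMinorOf {W U : Type} (H : SimpleGraph W) (G : SimpleGraph U) : Prop :=
  ∃ I : W → Set U,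
    (∀ u, (G.induce (I u)).Connected) ∧
    (Pairwise fun u v => Disjoint (I u) (I v)) ∧
    (∀ u v, H.Adj u v → ∃ x ∈ I u, ∃ y ∈ I v, G.Adj x y)

/-- `G` is `H`-minor-free. -/
def MinorFree {W U : Type} (H : SimpleGraph W) (G : SimpleGraph U) : Prop := ¬ IsMinorOf H G

/-! ### Weak bipaths -/

/-- A weak bipath in a digraph: a sequence of at least 3 distinct vertices whose internal
vertices have in-neighbourhood exactly the two adjacent vertices of the sequence, both
of which are also out-neighbours. -/
structure WeakBipath {W : Type} (E : W → W → Prop) where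
  len : ℕ
  u : Fin (len + 3) → W
  inj : Function.Injective u
  cond : ∀ i j k : Fin (len + 3), j.val + 1 = i.val → i.val + 1 = k.val →
    (∀ w, E w (u i) ↔ (w = u j ∨ w = u k)) ∧ E (u i) (u j) ∧ E (u i) (u k)

/-- The set of internal vertices of a weak bipath. -/
def WeakBipath.internal {W : Type} {E : W → W → Prop} (P : WeakBipath E) : Set W :=
  {w | ∃ i : Fin (P.len + 3), 0 < i.val ∧ i.val < P.len + 2 ∧ P.u i = w}

/-- The first extremity of a weak bipath. -/
def WeakBipath.first {W : Type} {E : W → W → Prop} (P : WeakBipath E) : W := P.u 0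

/-- The last extremity of a weak bipath. -/
def WeakBipath.last {W : Type} {E : W → W → Prop} (P : WeakBipath E) : W :=
  P.u (Fin.last (P.len + 2))

/-! Inside one bag the lonely cut-edges form a single directed path: two lonely cut-edges never
share a tail by definition, and never share a head because, by Rule 4, the tail of a cut-edge is
the only in-neighbour of its head. The same fact shows that an edge entering a bag from outside
must end at the first vertex of that path, so all edges from `A` to `B` share their head `y`.
Two of them, from `x` and from a later vertex `x'` of the path of `A`, are excluded by Rule 4
applied to the edge `x'y`: a path from `r` to `x'` avoiding `x` would also reach `x`, since every
path to the head of a cut-edge passes through its tail. -/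

theorem _root_.Relation.EqvGen.reflTransGen_or_reflTransGen {α : Type*} {L : α → α → Prop}
    (hl : Relator.LeftUnique L) (hr : Relator.RightUnique L) {a b : α}
    (h : Relation.EqvGen L a b) :
    Relation.ReflTransGen L a b ∨ Relation.ReflTransGen L b a := by
  induction h with
  | rel x y hxy => exact .inl (.single hxy)
  | refl => exact .inl .refl
  | symm _ _ _ ih => exact ih.symm
  | trans x y z _ _ ih₁ ih₂ =>
    rcases ih₁ with h₁ | h₁ <;> rcases ih₂ with h₂ | h₂
    · exact .inl (h₁.trans h₂)
    · have hr' : Relator.RightUnique (Function.swap L) := fun _ _ _ h h' => hl h h'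
      simpa only [Relation.reflTransGen_swap, or_comm] using
        Relation.ReflTransGen.total_of_right_unique hr'
          (Relation.reflTransGen_swap.2 h₁) (Relation.reflTransGen_swap.2 h₂)
    · exact Relation.ReflTransGen.total_of_right_unique hr h₁ h₂
    · exact .inr (h₂.trans h₁)

section CutEdges

variable {E : V → V → Prop} {r : V}

theorem connected_delEdge_of_reaches_head (hconn : Connected E r) {u v : V}
    (hv : Reaches (delEdge E u v) r v) : Connected (delEdge E u v) r := by
  intro z
  induction hconn z with
  | refl => exact .refl
  | @tail b c _ hbc ih =>
    by_cases hbc' : b = u ∧ c = v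
    · exact hbc'.2 ▸ hv
    · exact ih.tail ⟨hbc, hbc'⟩

theorem IsCutEdge.not_reaches_head (hconn : Connected E r) {u v : V} (h : IsCutEdge E r u v) :
    ¬ Reaches (delEdge E u v) r v := fun hv =>
  let ⟨_, w, hw⟩ := h
  hw (connected_delEdge_of_reaches_head hconn hv w)

theorem IsCutEdge.reaches_tail_of_reaches_head (hconn : Connected E r) {u v : V}
    (h : IsCutEdge E r u v) {F : V → V → Prop} (hFE : ∀ ⦃a b⦄, F a b → E a b)
    (hv : Reaches F r v) : Reaches F r u := by
  suffices ∀ t, Reaches F r t → Reaches (delEdge E u v) r t ∨ Reaches F r u from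
    (this v hv).resolve_left (h.not_reaches_head hconn)
  intro t ht
  induction ht with
  | refl => exact .inl .refl
  | @tail b c hrb hbc ih =>
    by_cases hbc' : b = u ∧ c = v
    · exact .inr (hbc'.1 ▸ hrb)
    · exact ih.imp_left fun hb => Relation.ReflTransGen.tail hb ⟨hFE hbc, hbc'⟩

theorem reaches_of_reflTransGen_isCutEdge (hconn : Connected E r) {F : V → V → Prop}
    (hFE : ∀ ⦃a b⦄, F a b → E a b) {x x' : V}
    (hch : Relation.ReflTransGen (IsCutEdge E r) x x') (hx' : Reaches F r x') :
    Reaches F r x := by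
  induction hch with
  | refl => exact hx'
  | tail _ hbc ih => exact ih (hbc.reaches_tail_of_reaches_head hconn hFE hx')

theorem IsCutEdge.eq_of_adj_head (hconn : Connected E r) (h4 : Rule4NA E r) {u v p : V}
    (h : IsCutEdge E r u v) (hp : E p v) : p = u := by
  by_contra hpu
  obtain ⟨-, -, hrp⟩ : ReachAvoid E {w | E w v ∧ w ≠ p} r p :=
    by_contra fun hna => h4 ⟨v, p, hp, hna⟩
  -- `u` is one of the avoided in-neighbours of `v`, so the path never uses the edge `uv`
  have hrp' : Reaches (delEdge E u v) r p :=
    Relation.ReflTransGen.mono (fun _ _ hab => ⟨hab.1, fun hau =>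
      hab.2.1 ⟨hau.1 ▸ h.1, fun hap => hpu (hap.symm.trans hau.1)⟩⟩) _ _ hrp
  exact h.not_reaches_head hconn (Relation.ReflTransGen.tail hrp' ⟨hp, fun hpu' => hpu hpu'.1⟩)

theorem eq_of_reflTransGen_lonelyRel_of_adj (hconn : Connected E r) (h4 : Rule4NA E r) {x x' y : V}
    (hch : Relation.ReflTransGen (lonelyRel E r) x x') (hxy : E x y) (hx'y : E x' y) :
    x = x' := by
  by_contra hne
  obtain ⟨hr, -, hrx'⟩ : ReachAvoid E {w | E w y ∧ w ≠ x'} r x' :=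
    by_contra fun hna => h4 ⟨y, x', hx'y, hna⟩
  have hrx : Reaches _ r x :=
    reaches_of_reflTransGen_isCutEdge hconn (fun _ _ hab => hab.1)
      (Relation.ReflTransGen.mono (fun _ _ h => h.1) _ _ hch) hrx'
  rcases hrx.cases_tail with rfl | ⟨w, -, hwx⟩
  · exact hr ⟨hxy, hne⟩
  · exact hwx.2.2 ⟨hxy, hne⟩

theorem lonelyRel_leftUnique (hconn : Connected E r) (h4 : Rule4NA E r) :
    Relator.LeftUnique (lonelyRel E r) := fun _ _ _ ha hb =>
  (ha.1.eq_of_adj_head hconn h4 hb.1.1).symm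

theorem lonelyRel_rightUnique : Relator.RightUnique (lonelyRel E r) := fun _ _ c hb hc =>
  (hb.2 c hc.1).symm

theorem reflTransGen_lonelyRel_or_of_mem_bag (hconn : Connected E r) (h4 : Rule4NA E r)
    {a : ContractedVert E r} {x x' : V} (hx : x ∈ bag E r a) (hx' : x' ∈ bag E r a) :
    Relation.ReflTransGen (lonelyRel E r) x x' ∨ Relation.ReflTransGen (lonelyRel E r) x' x :=
  (Quotient.exact (hx.trans hx'.symm)).reflTransGen_or_reflTransGen
    (lonelyRel_leftUnique hconn h4) lonelyRel_rightUnique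

theorem not_lonelyRel_of_adj_into_bag (hconn : Connected E r) (h4 : Rule4NA E r)
    {b : ContractedVert E r} {x y w : V} (hxy : E x y) (hx : x ∉ bag E r b)
    (hy : y ∈ bag E r b) : ¬ lonelyRel E r w y := fun hw =>
  hx <| (hw.1.eq_of_adj_head hconn h4 hxy).symm ▸
    (Quotient.sound (Relation.EqvGen.rel _ _ hw)).trans hy

theorem heads_eq_of_adj_into_bag (hconn : Connected E r) (h4 : Rule4NA E r)
    {b : ContractedVert E r} {x y x' y' : V} (hxy : E x y) (hx'y' : E x' y')
    (hx : x ∉ bag E r b) (hx' : x' ∉ bag E r b) (hy : y ∈ bag E r b)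
    (hy' : y' ∈ bag E r b) :
    y = y' := by
  rcases reflTransGen_lonelyRel_or_of_mem_bag hconn h4 hy hy' with h | h
  · rcases h.cases_tail with rfl | ⟨w, -, hw⟩
    · rfl
    · exact absurd hw (not_lonelyRel_of_adj_into_bag hconn h4 hx'y' hx' hy')
  · rcases h.cases_tail with rfl | ⟨w, -, hw⟩
    · rfl
    · exact absurd hw (not_lonelyRel_of_adj_into_bag hconn h4 hxy hx hy)

theorem subsingleton_edges_between_bags (hconn : Connected E r) (h4 : Rule4NA E r)
    {a b : ContractedVert E r} (hab : a ≠ b) :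
    {p : V × V | p.1 ∈ bag E r a ∧ p.2 ∈ bag E r b ∧ E p.1 p.2}.Subsingleton := by
  rintro ⟨x, y⟩ ⟨hx, hy, hxy⟩ ⟨x', y'⟩ ⟨hx', hy', hx'y'⟩
  have not_mem_b : ∀ {z}, z ∈ bag E r a → z ∉ bag E r b := fun hz hz' =>
    hab (hz.symm.trans hz')
  obtain rfl :=
    heads_eq_of_adj_into_bag hconn h4 hxy hx'y' (not_mem_b hx) (not_mem_b hx') hy hy'
  obtain rfl : x = x' := by
    rcases reflTransGen_lonelyRel_or_of_mem_bag hconn h4 hx hx' with h | h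
    exacts [eq_of_reflTransGen_lonelyRel_of_adj hconn h4 h hxy hx'y',
      (eq_of_reflTransGen_lonelyRel_of_adj hconn h4 h hx'y' hxy).symm]
  rfl

end CutEdges

theorem one_edge_between_linked_bags_general {V : Type} (E : V → V → Prop) (r : V)
    (hred : Reduced4 E r) :
    ∀ a b : ContractedVert E r, a ≠ b → LinkedBags E (bag E r a) (bag E r b) →
      (∃! p : V × V, p.1 ∈ bag E r a ∧ p.2 ∈ bag E r b ∧ E p.1 p.2) ∧
      (∃! p : V × V, p.1 ∈ bag E r b ∧ p.2 ∈ bag E r a ∧ E p.1 p.2) := by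
  obtain ⟨hconn, -, -, h4⟩ := hred
  rintro a b hab ⟨⟨x, hx, y, hy, hxy⟩, ⟨x', hx', y', hy', hx'y'⟩⟩
  exact ⟨⟨(x, y), ⟨hx, hy, hxy⟩, fun p hp =>
      subsingleton_edges_between_bags hconn h4 hab hp ⟨hx, hy, hxy⟩⟩,
    ⟨(x', y'), ⟨hx', hy', hx'y'⟩, fun p hp =>
      subsingleton_edges_between_bags hconn h4 hab.symm hp ⟨hx', hy', hx'y'⟩⟩⟩

/-- If reduction rules R1–R4 do not apply to the connected rooted digraph
`D` and two (distinct) bags `A`, `B` of `D_c` are linked, then `D` has exactly one edge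
from `A` to `B` and exactly one edge from `B` to `A`. -/
theorem one_edge_between_linked_bags {V : Type} [Fintype V] (E : V → V → Prop) (r : V)
    (hroot : ∀ u, ¬ E u r) (hred : Reduced4 E r) :
    ∀ a b : ContractedVert E r, a ≠ b → LinkedBags E (bag E r a) (bag E r b) →
      (∃! p : V × V, p.1 ∈ bag E r a ∧ p.2 ∈ bag E r b ∧ E p.1 p.2) ∧
      (∃! p : V × V, p.1 ∈ bag E r b ∧ p.2 ∈ bag E r a ∧ E p.1 p.2) :=
  one_edge_between_linked_bags_general E r hred

end OutBranching
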